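/- The function τ(κ) = Γ(2κ+1) / (2^{2-κ} Γ(κ+1)) is strictly monotonically increasing on the interval [1/2, 1]. -/
import Mathlib


noncomputable def tau (κ : ℝ) : ℝ :=
  Real.Gamma (2 * κ + 1) / (2 ^ ((2 : ℝ) - κ) * Real.Gamma (κ + 1))

open Real in
lemma tau_eq {κ : ℝ} (hκ : 0 < κ) :
    tau κ = 2 ^ (3 * κ - 2) * Real.Gamma (κ + 1 / 2) / Real.sqrt Real.pi := by
  have hΓ : 0 < Real.Gamma κ := Real.Gamma_pos_of_pos hκ
  have hsπ : 0 < Real.sqrt Real.pi := Real.sqrt_pos.mpr Real.pi_pos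
  have hdup := Real.Gamma_mul_Gamma_add_half κ
  have h1 : Real.Gamma (2 * κ + 1) = 2 * κ * Real.Gamma (2 * κ) :=
    Real.Gamma_add_one (by positivity)
  have h2 : Real.Gamma (κ + 1) = κ * Real.Gamma κ :=
    Real.Gamma_add_one hκ.ne'
  have hcancel : (2:ℝ) ^ (2 * κ - 1) * (2:ℝ) ^ (1 - 2 * κ) = 1 := by
    rw [← Real.rpow_add two_pos]
    norm_num
  have hpow : (2:ℝ) * ((2:ℝ) ^ (2 * κ - 1)) = (2:ℝ) ^ (3 * κ - 2) * (2:ℝ) ^ ((2:ℝ) - κ) := by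
    rw [← Real.rpow_add two_pos]
    nth_rewrite 1 [show (2:ℝ) = (2:ℝ) ^ (1:ℝ) by rw [Real.rpow_one]]
    rw [← Real.rpow_add two_pos]
    ring_nf
  have hkey : Real.Gamma (2 * κ + 1) * Real.sqrt Real.pi =
      2 ^ (3 * κ - 2) * Real.Gamma (κ + 1 / 2) * (2 ^ ((2 : ℝ) - κ) * Real.Gamma (κ + 1)) := by
    rw [h1, h2]
    linear_combination (κ * Real.Gamma κ * Real.Gamma (κ + 1 / 2)) * hpow
      - (2 * κ * (2:ℝ) ^ (2 * κ - 1)) * hdup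
      - (2 * κ * Real.Gamma (2 * κ) * Real.sqrt Real.pi) * hcancel
  have hden : (0:ℝ) < 2 ^ ((2:ℝ) - κ) * Real.Gamma (κ + 1) := by
    have := Real.Gamma_pos_of_pos (show (0:ℝ) < κ + 1 by linarith)
    positivity
  rw [tau, div_eq_div_iff hden.ne' hsπ.ne']
  linarith [hkey]

theorem tau_strictMonoOn : StrictMonoOn tau (Set.Icc (1 / 2 : ℝ) 1) := by
  intro x hx y hy hxy
  obtain ⟨hx1, hx2⟩ := hx
  obtain ⟨hy1, hy2⟩ := hy
  have hxpos : (0:ℝ) < x := by linarith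
  have hypos : (0:ℝ) < y := by linarith
  rw [tau_eq hxpos, tau_eq hypos]
  have hsπ : 0 < Real.sqrt Real.pi := Real.sqrt_pos.mpr Real.pi_pos
  rw [div_lt_div_iff_of_pos_right hsπ]
  -- key convexity estimate
  set s := x + 1 / 2 with hs
  set t := y + 1 / 2 with ht
  have hs1 : (1:ℝ) ≤ s := by simp [hs]; linarith
  have hst : s < t := by simp [hs, ht]; linarith
  have hΓs : 0 < Real.Gamma s := Real.Gamma_pos_of_pos (by linarith)
  have hΓt : 0 < Real.Gamma t := Real.Gamma_pos_of_pos (by linarith)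
  have hconv := Real.convexOn_log_Gamma
  have mem : ∀ z : ℝ, 0 < z → z ∈ Set.Ioi (0:ℝ) := fun z hz => hz
  have f12 : (Real.log ∘ Real.Gamma) (1/2) = Real.log Real.pi / 2 := by
    show Real.log (Real.Gamma (1/2)) = _
    rw [Real.Gamma_one_half_eq, Real.log_sqrt Real.pi_pos.le]
  have f1 : (Real.log ∘ Real.Gamma) 1 = 0 := by
    show Real.log (Real.Gamma 1) = 0
    rw [Real.Gamma_one, Real.log_one]
  -- slope (1/2, 1) ≤ slope (1/2, s)
  have step1 : ((Real.log ∘ Real.Gamma) 1 - (Real.log ∘ Real.Gamma) (1/2)) / (1 - 1/2) ≤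
      ((Real.log ∘ Real.Gamma) s - (Real.log ∘ Real.Gamma) (1/2)) / (s - 1/2) :=
    hconv.secant_mono (mem _ (by norm_num)) (mem _ one_pos) (mem _ (by linarith))
      (by norm_num) (by intro h; rw [h] at hs1; norm_num at hs1) hs1
  -- slope (1/2, s) ≤ slope (s, t)
  have step2 : ((Real.log ∘ Real.Gamma) s - (Real.log ∘ Real.Gamma) (1/2)) / (s - 1/2) ≤
      ((Real.log ∘ Real.Gamma) t - (Real.log ∘ Real.Gamma) s) / (t - s) :=
    hconv.slope_mono_adjacent (mem _ (by norm_num)) (mem _ (by linarith))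
      (by linarith) hst
  have key : -(Real.log Real.pi) * (t - s) ≤ Real.log (Real.Gamma t) - Real.log (Real.Gamma s) := by
    have h := step1.trans step2
    rw [f12, f1] at h
    have hts : 0 < t - s := by linarith
    have : -(Real.log Real.pi) ≤ (Real.log (Real.Gamma t) - Real.log (Real.Gamma s)) / (t - s) := by
      calc -(Real.log Real.pi) = (0 - Real.log Real.pi / 2) / (1 - 1/2) := by ring
        _ ≤ _ := h
    calc -(Real.log Real.pi) * (t - s) ≤
        ((Real.log (Real.Gamma t) - Real.log (Real.Gamma s)) / (t - s)) * (t - s) := by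
          exact mul_le_mul_of_nonneg_right this hts.le
      _ = _ := by field_simp
  -- π < 8 gives strictness
  have hπ8 : Real.log Real.pi < 3 * Real.log 2 := by
    have h1 : Real.log Real.pi < Real.log 8 := Real.log_lt_log Real.pi_pos
      (by nlinarith [Real.pi_lt_d2])
    have h2 : Real.log 8 = 3 * Real.log 2 := by
      rw [show (8:ℝ) = 2 ^ (3:ℕ) by norm_num, Real.log_pow]
      norm_num
    linarith
  have hd : 0 < y - x := by linarith
  have hts : t - s = y - x := by rw [hs, ht]; ring
  -- log inequality
  have hlog : Real.log ((2:ℝ) ^ (3 * x - 2) * Real.Gamma s) <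
      Real.log ((2:ℝ) ^ (3 * y - 2) * Real.Gamma t) := by
    rw [Real.log_mul (by positivity) hΓs.ne', Real.log_mul (by positivity) hΓt.ne',
      Real.log_rpow two_pos, Real.log_rpow two_pos]
    have : -(Real.log Real.pi) * (y - x) ≤ Real.log (Real.Gamma t) - Real.log (Real.Gamma s) := by
      rw [← hts]; exact key
    nlinarith [Real.log_pos (by norm_num : (1:ℝ) < 2)]
  have h2x : (0:ℝ) < (2:ℝ) ^ (3 * x - 2) := Real.rpow_pos_of_pos two_pos _
  have h2y : (0:ℝ) < (2:ℝ) ^ (3 * y - 2) := Real.rpow_pos_of_pos two_pos _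
  exact (Real.log_lt_log_iff (by positivity) (by positivity)).mp hlog
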